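/- arXiv:1807.03822 — 2 statements merged into one kernel-verified Lean document; each statement's English description precedes it below -/
import Mathlib

section
/- A metric space (X,d) is cofinally complete if and only if for every almost uniformly continuous function f: X → ℝ that is never zero, the function 1/f is almost bounded. -/
open Metric Filter

/-- A sequence is cofinally Cauchy if for every ε>0 there is an infinite index set
on which all pairwise distances are < ε. -/
def CofinallyCauchy {X : Type*} [MetricSpace X] (x : ℕ → X) : Prop :=
  ∀ ε > 0, ∃ N : Set ℕ, N.Infinite ∧ ∀ n ∈ N, ∀ j ∈ N, dist (x n) (x j) < ε

/-- A function is almost bounded if for every ε>0 there is δ>0 such that the image of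
every set of diameter < δ is contained in a finite union of open ε-balls. -/
def AlmostBounded {X Y : Type*} [MetricSpace X] [MetricSpace Y] (f : X → Y) : Prop :=
  ∀ ε > 0, ∃ δ > 0, ∀ A : Set X, EMetric.diam A < ENNReal.ofReal δ →
    ∃ B : Finset Y, f '' A ⊆ ⋃ b ∈ B, Metric.ball b ε

/-- A metric space is cofinally complete if every cofinally Cauchy sequence clusters. -/
def CofinallyComplete (X : Type*) [MetricSpace X] : Prop :=
  ∀ x : ℕ → X, CofinallyCauchy x → ∃ p : X, MapClusterPt p atTop x

/-- The local total boundedness functional. -/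
noncomputable def tFun {X : Type*} [MetricSpace X] (x : X) : ℝ :=
  sSup {ε : ℝ | 0 < ε ∧ TotallyBounded (Metric.ball x ε)}

/-!
If `X` is cofinally complete, every continuous map into a proper space is almost bounded:
otherwise there are sets of diameter tending to `0` with unbounded images, and picking in each of
them infinitely many points whose images escape to infinity yields a cofinally Cauchy sequence,
whose cluster point contradicts continuity. Conversely, if a cofinally Cauchy sequence `x` had no
cluster point, the distance `f` from `(w, 0)` to `{(x m, 1 / (m + 1))}` in `X × ℝ` would be
positive and uniformly continuous, and `1 / f ≥ m + 1` at `x m` would be unbounded on every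
infinite set of indices, while almost boundedness bounds it on an infinite set where `x` has
small diameter.
-/

open Bornology Set

section

variable {X Y : Type*} [MetricSpace X] [MetricSpace Y]

theorem UniformContinuous.almostBounded {f : X → Y} (hf : UniformContinuous f) :
    AlmostBounded f := by
  intro ε hε
  obtain ⟨δ, hδ, hfδ⟩ := Metric.uniformContinuous_iff.mp hf ε hε
  refine ⟨δ, hδ, fun A hA => ?_⟩
  rcases A.eq_empty_or_nonempty with rfl | ⟨a, ha⟩
  · exact ⟨∅, by simp⟩
  · refine ⟨{f a}, ?_⟩
    rintro _ ⟨w, hw, rfl⟩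
    simpa using hfδ (edist_lt_ofReal.mp ((edist_le_ediam_of_mem hw ha).trans_lt hA))

theorem AlmostBounded.exists_isBounded_image {f : X → Y} (hf : AlmostBounded f) :
    ∃ δ > 0, ∀ A : Set X, ediam A < ENNReal.ofReal δ → IsBounded (f '' A) := by
  obtain ⟨δ, hδ, hcover⟩ := hf 1 one_pos
  refine ⟨δ, hδ, fun A hA => ?_⟩
  obtain ⟨B, hB⟩ := hcover A hA
  exact ((isBounded_biUnion_finset B).mpr fun b _ => isBounded_ball).subset hB

theorem almostBounded_of_isBounded_image [ProperSpace Y] {f : X → Y} {δ : ℝ} (hδ : 0 < δ)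
    (hf : ∀ A : Set X, ediam A < ENNReal.ofReal δ → IsBounded (f '' A)) : AlmostBounded f := by
  intro ε hε
  refine ⟨δ, hδ, fun A hA => ?_⟩
  have hA : TotallyBounded (f '' A) :=
    (hf A hA).isCompact_closure.totallyBounded.subset subset_closure
  obtain ⟨t, -, ht, hcover⟩ := finite_approx_of_totallyBounded hA ε hε
  exact ⟨ht.toFinset, by simpa using hcover⟩

theorem cofinallyCauchy_of_frequently_mem {A : ℕ → Set X} {z : ℕ → X}
    (hA : ∀ ε > 0, ∃ n, ediam (A n) < ENNReal.ofReal ε) (hz : ∀ n, ∃ᶠ i in atTop, z i ∈ A n) :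
    CofinallyCauchy z := by
  intro ε hε
  obtain ⟨n, hn⟩ := hA ε hε
  refine ⟨{i | z i ∈ A n}, Nat.frequently_atTop_iff_infinite.mp (hz n), fun i hi j hj => ?_⟩
  exact edist_lt_ofReal.mp ((edist_le_ediam_of_mem (x := z i) hi hj).trans_lt hn)

theorem Nat.frequently_atTop_unpair_fst_eq (n : ℕ) : ∃ᶠ i in atTop, (Nat.unpair i).1 = n := by
  refine Nat.frequently_atTop_iff_infinite.mpr
    ((infinite_range_of_injective (f := Nat.pair n) fun a b h => (Nat.pair_eq_pair.mp h).2).mono ?_)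
  rintro _ ⟨k, rfl⟩
  simp

theorem not_mapClusterPt_of_tendsto_dist {ι : Type*} {F : Filter ι} {u : ι → Y} {c q : Y}
    (hu : Tendsto (fun i => dist (u i) c) F atTop) : ¬ MapClusterPt q F u := by
  intro hq
  have hnear := mapClusterPt_iff_frequently.mp hq (ball q 1) (ball_mem_nhds q one_pos)
  obtain ⟨i, hi, hfar⟩ := (hnear.and_eventually (hu.eventually_gt_atTop (dist q c + 1))).exists
  linarith [dist_triangle (u i) q c, mem_ball.mp hi]

theorem CofinallyComplete.almostBounded_of_continuous [ProperSpace Y] (hX : CofinallyComplete X)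
    {g : X → Y} (hg : Continuous g) : AlmostBounded g := by
  by_contra hnot
  have hunb : ∀ n : ℕ, ∃ A : Set X,
      ediam A < ENNReal.ofReal (1 / (n + 1)) ∧ ¬ IsBounded (g '' A) := by
    intro n
    by_contra! h
    exact hnot (almostBounded_of_isBounded_image (by positivity) h)
  choose A hAdiam hAunb using hunb
  obtain ⟨_, c, -, rfl⟩ := nonempty_of_not_isBounded (hAunb 0)
  have hfar : ∀ i : ℕ, ∃ w ∈ A (Nat.unpair i).1, (i : ℝ) < dist (g w) (g c) := by
    intro i
    obtain ⟨_, ⟨w, hw, rfl⟩, hwc⟩ :=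
      not_subset.mp fun h : g '' A (Nat.unpair i).1 ⊆ closedBall (g c) i =>
        hAunb _ (isBounded_closedBall.subset h)
    exact ⟨w, hw, not_le.mp hwc⟩
  choose z hzA hzfar using hfar
  have hz : CofinallyCauchy z := by
    refine cofinallyCauchy_of_frequently_mem (A := A) (fun ε hε => ?_) fun n =>
      (Nat.frequently_atTop_unpair_fst_eq n).mono fun i hi => hi ▸ hzA i
    obtain ⟨n, hn⟩ := exists_nat_one_div_lt hε
    exact ⟨n, (hAdiam n).trans_le (ENNReal.ofReal_le_ofReal hn.le)⟩
  obtain ⟨p, hp⟩ := hX z hz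
  exact not_mapClusterPt_of_tendsto_dist
    (tendsto_atTop_mono (fun i => (hzfar i).le) tendsto_natCast_atTop_atTop)
    (hp.continuousAt_comp hg.continuousAt)

/-- Vanishes exactly at the cluster points of `x`: the second coordinate forces `m → ∞`. -/
noncomputable def graphInfDist (x : ℕ → X) (w : X) : ℝ :=
  infDist (w, (0 : ℝ)) (range fun m : ℕ => (x m, ((m : ℝ) + 1)⁻¹))

theorem uniformContinuous_graphInfDist (x : ℕ → X) : UniformContinuous (graphInfDist x) :=
  (uniformContinuous_infDist_pt _).comp (uniformContinuous_id.prodMk uniformContinuous_const)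

theorem graphInfDist_apply_le (x : ℕ → X) (m : ℕ) : graphInfDist x (x m) ≤ ((m : ℝ) + 1)⁻¹ :=
  (infDist_le_dist_of_mem (mem_range_self m)).trans_eq <| by
    simp only [Prod.dist_eq, dist_self, Real.dist_eq, zero_sub, abs_neg]
    rw [abs_of_pos (by positivity), max_eq_right (by positivity)]

theorem mapClusterPt_of_graphInfDist_eq_zero {x : ℕ → X} {w : X} (h : graphInfDist x w = 0) :
    MapClusterPt w atTop x := by
  rw [graphInfDist, ← mem_closure_iff_infDist_zero (range_nonempty _), mem_closure_range_iff] at h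
  rw [nhds_basis_ball.mapClusterPt_iff_frequently]
  intro ε hε
  refine frequently_atTop.mpr fun N => ?_
  obtain ⟨k, hk⟩ := h (min ε ((N : ℝ) + 1)⁻¹) (by positivity)
  rw [Prod.dist_eq, max_lt_iff, lt_min_iff, lt_min_iff] at hk
  obtain ⟨⟨hkε, -⟩, -, hkN⟩ := hk
  rw [Real.dist_eq, zero_sub, abs_neg, abs_of_pos (by positivity),
    inv_lt_inv₀ (by positivity) (by positivity)] at hkN
  exact ⟨k, by exact_mod_cast (lt_of_add_lt_add_right hkN).le, mem_ball'.mpr hkε⟩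

theorem graphInfDist_pos {x : ℕ → X} (hx : ∀ p, ¬ MapClusterPt p atTop x) (w : X) :
    0 < graphInfDist x w :=
  infDist_nonneg.lt_of_ne' fun h => hx w (mapClusterPt_of_graphInfDist_eq_zero h)

theorem CofinallyCauchy.exists_infinite_isBounded_image {x : ℕ → X} (hx : CofinallyCauchy x)
    {f : X → Y} (hf : AlmostBounded f) : ∃ N : Set ℕ, N.Infinite ∧ IsBounded ((f ∘ x) '' N) := by
  obtain ⟨δ, hδ, hbdd⟩ := hf.exists_isBounded_image
  obtain ⟨N, hN, hNdist⟩ := hx (δ / 2) (half_pos hδ)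
  refine ⟨N, hN, image_comp f x N ▸ hbdd _ ?_⟩
  refine lt_of_le_of_lt (ediam_le ?_) ((ENNReal.ofReal_lt_ofReal_iff hδ).mpr (half_lt_self hδ))
  rintro _ ⟨n, hn, rfl⟩ _ ⟨j, hj, rfl⟩
  exact (edist_le_ofReal (half_pos hδ).le).mpr (hNdist n hn j hj).le

end

/-- X is cofinally complete iff for every almost uniformly continuous real-valued f that
is never zero, 1/f is almost bounded. -/
theorem cofinallyComplete_iff_inv_almostBounded {X : Type*} [MetricSpace X] :
    CofinallyComplete X ↔
      ∀ f : X → ℝ, Continuous f → AlmostBounded f → (∀ x, f x ≠ 0) →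
        AlmostBounded (fun x => (f x)⁻¹) := by
  refine ⟨fun hX f hf _ hf0 => hX.almostBounded_of_continuous (hf.inv₀ hf0), fun H x hx => ?_⟩
  by_contra! hno_cluster
  set f := graphInfDist x
  have hf_pos := graphInfDist_pos hno_cluster
  have hf_unif := uniformContinuous_graphInfDist x
  obtain ⟨N, hN, hbdd⟩ := hx.exists_infinite_isBounded_image
    (H f hf_unif.continuous hf_unif.almostBounded fun w => (hf_pos w).ne')
  obtain ⟨C, hC⟩ := isBounded_iff_forall_norm_le.mp hbdd
  obtain ⟨m, hmN, hmC⟩ := hN.exists_gt ⌈C⌉₊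
  have hlarge : (m : ℝ) + 1 ≤ (f (x m))⁻¹ :=
    (le_inv_comm₀ (Nat.cast_add_one_pos m) (hf_pos _)).mpr (graphInfDist_apply_le x m)
  have hsmall : (f (x m))⁻¹ ≤ C :=
    (le_abs_self _).trans (hC _ (mem_image_of_mem _ hmN))
  have hCm : C < m := (Nat.le_ceil C).trans_lt (by exact_mod_cast hmC)
  linarith
end

section
/- If two metric spaces (X,d) and (Y,ρ) are almost uniformly homeomorphic (there is a bijection f with both f and f⁻¹ almost uniformly continuous), then (X,d) is cofinally complete if and only if (Y,ρ) is cofinally complete. -/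
open Metric Filter

/-
An almost bounded map `g` sends cofinally Cauchy sequences to cofinally Cauchy sequences: an
infinite `δ`-close set of indices of `x` is mapped by `g` into finitely many `ε/2`-balls, and by
pigeonhole one ball catches infinitely many of those indices. So if `x` is cofinally Cauchy in `Y`,
then `g ∘ x` clusters at some `p` in the cofinally complete space `X`, and continuity of the inverse
`f` makes `x = f ∘ g ∘ x` cluster at `f p`.
-/

theorem Set.Infinite.exists_infinite_inter_of_subset_biUnion {ι α : Type*} {N : Set α}
    (hN : N.Infinite) {B : Set ι} (hB : B.Finite) {S : ι → Set α} (hNS : N ⊆ ⋃ b ∈ B, S b) :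
    ∃ b ∈ B, (N ∩ S b).Infinite := by
  by_contra! hfin
  refine hN ((hB.biUnion hfin).subset ?_)
  rw [← Set.inter_iUnion₂]
  exact Set.subset_inter subset_rfl hNS

section

variable {X Y : Type*} [MetricSpace X] [MetricSpace Y]

theorem CofinallyCauchy.comp_of_almostBounded {x : ℕ → X} (hx : CofinallyCauchy x)
    {g : X → Y} (hg : AlmostBounded g) : CofinallyCauchy (g ∘ x) := by
  intro ε hε
  obtain ⟨δ, hδ, hcover⟩ := hg (ε / 2) (half_pos hε)
  obtain ⟨N, hN, hxN⟩ := hx (δ / 2) (half_pos hδ)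
  have hdiam : Metric.ediam (x '' N) < ENNReal.ofReal δ := by
    refine (Metric.ediam_le_of_forall_dist_le (C := δ / 2) ?_).trans_lt
      ((ENNReal.ofReal_lt_ofReal_iff hδ).2 (half_lt_self hδ))
    rintro _ ⟨n, hn, rfl⟩ _ ⟨j, hj, rfl⟩
    exact (hxN n hn j hj).le
  obtain ⟨B, hB⟩ := hcover _ hdiam
  have hNB : N ⊆ ⋃ b ∈ (B : Set Y), (g ∘ x) ⁻¹' ball b (ε / 2) := by
    rwa [← Set.image_comp, Set.image_subset_iff, Set.preimage_iUnion₂] at hB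
  obtain ⟨b, -, hb⟩ := hN.exists_infinite_inter_of_subset_biUnion B.finite_toSet hNB
  refine ⟨_, hb, fun n hn j hj => ?_⟩
  calc dist (g (x n)) (g (x j)) ≤ dist (g (x n)) b + dist (g (x j)) b := dist_triangle_right _ _ _
    _ < ε / 2 + ε / 2 := add_lt_add hn.2 hj.2
    _ = ε := add_halves ε

theorem CofinallyComplete.of_leftInverse (hX : CofinallyComplete X) {f : X → Y} {g : Y → X}
    (hfg : Function.LeftInverse f g) (hf : Continuous f) (hg : AlmostBounded g) :
    CofinallyComplete Y := by
  intro y hy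
  obtain ⟨p, hp⟩ := hX _ (hy.comp_of_almostBounded hg)
  refine ⟨f p, ?_⟩
  simpa only [← Function.comp_assoc, hfg.comp_eq_id, Function.id_comp] using
    hp.continuousAt_comp hf.continuousAt

end

/-- If X and Y are almost uniformly homeomorphic, then X is cofinally complete iff Y is. -/
theorem almostUniformHomeomorph_cofinallyComplete {X Y : Type*} [MetricSpace X]
    [MetricSpace Y] (f : X → Y) (g : Y → X)
    (hgf : ∀ x, g (f x) = x) (hfg : ∀ y, f (g y) = y)
    (hfc : Continuous f) (hfb : AlmostBounded f)
    (hgc : Continuous g) (hgb : AlmostBounded g) :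
    CofinallyComplete X ↔ CofinallyComplete Y :=
  ⟨fun hX => hX.of_leftInverse hfg hfc hgb, fun hY => hY.of_leftInverse hgf hgc hfb⟩
end
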